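/- arXiv:1811.10662 — 3 statements merged into one kernel-verified Lean document; each statement's English description precedes it below -/
import Mathlib

section
/- Let H : ℝⁿ → ℝ be a differentiable convex function, G : ℝⁿ → ℝ a convex function with G(u)/|u| → ∞ as |u| → ∞, and β, γ > 0 constants such that −β ≤ H(u) ≤ G(u) + γ for all u ∈ ℝⁿ. Then for any r > 1 and every u ∈ ℝⁿ, G⋆(∇H(u)) ≤ (1/(r−1))·G(r·u) + (r/(r−1))·(β + γ). -/
open scoped RealInnerProductSpace
open Filter

/-
Since `H` is convex, it lies above its tangent planes: `H w ≥ H u + ⟪∇H u, w - u⟫`.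
Combined with `H w ≤ G w + γ` and `-β ≤ H u` this bounds every `⟪w, ∇H u⟫ - G w` by
`⟪u, ∇H u⟫ + β + γ`, hence `G⋆(∇H u) ≤ ⟪u, ∇H u⟫ + β + γ`. The tangent plane inequality at
`w = r • u` gives in turn `(r - 1) ⟪u, ∇H u⟫ ≤ G (r • u) + β + γ`.
-/

theorem ConvexOn.apply_sub_le_of_hasFDerivAt {E : Type*} [NormedAddCommGroup E]
    [NormedSpace ℝ E] {f : E → ℝ} {f' : E →L[ℝ] ℝ} {x : E}
    (hf : ConvexOn ℝ Set.univ f) (hx : HasFDerivAt f f' x) (y : E) :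
    f' (y - x) ≤ f y - f x := by
  have hline : ConvexOn ℝ Set.univ (f ∘ AffineMap.lineMap (k := ℝ) x y) := by
    simpa using hf.comp_affineMap (AffineMap.lineMap x y)
  have hderiv : HasDerivAt (f ∘ AffineMap.lineMap (k := ℝ) x y) (f' (y - x)) 0 := by
    rw [← AffineMap.lineMap_apply_zero (k := ℝ) x y] at hx
    exact hx.comp_hasDerivAt 0 AffineMap.hasDerivAt_lineMap
  simpa [slope_def_field] using
    hline.le_slope_of_hasDerivAt (Set.mem_univ 0) (Set.mem_univ 1) one_pos hderiv

theorem ConvexOn.inner_sub_le_of_hasGradientAt {E : Type*} [NormedAddCommGroup E]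
    [InnerProductSpace ℝ E] [CompleteSpace E] {f : E → ℝ} {g x : E}
    (hf : ConvexOn ℝ Set.univ f) (hx : HasGradientAt f g x) (y : E) :
    ⟪g, y - x⟫ ≤ f y - f x := by
  simpa using hf.apply_sub_le_of_hasFDerivAt hx.hasFDerivAt y

section Sandwich

variable {E : Type*} [NormedAddCommGroup E] [InnerProductSpace ℝ E] [CompleteSpace E]
  {H G : E → ℝ} {β γ : ℝ} {g u : E}

theorem conjugate_le_inner_add_of_sandwich (hH : ConvexOn ℝ Set.univ H)
    (hg : HasGradientAt H g u) (hbound : ∀ u, -β ≤ H u ∧ H u ≤ G u + γ) {s : ℝ}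
    (hs : IsLUB {x : ℝ | ∃ w, x = ⟪w, g⟫ - G w} s) :
    s ≤ ⟪u, g⟫ + (β + γ) := by
  refine hs.2 ?_
  rintro _ ⟨w, rfl⟩
  have htangent := hH.inner_sub_le_of_hasGradientAt hg w
  rw [inner_sub_right, real_inner_comm w g, real_inner_comm u g] at htangent
  linarith [(hbound u).1, (hbound w).2]

theorem sub_one_mul_inner_le_of_sandwich (hH : ConvexOn ℝ Set.univ H)
    (hg : HasGradientAt H g u) (hbound : ∀ u, -β ≤ H u ∧ H u ≤ G u + γ) (r : ℝ) :
    (r - 1) * ⟪u, g⟫ ≤ G (r • u) + β + γ := by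
  have htangent := hH.inner_sub_le_of_hasGradientAt hg (r • u)
  rw [inner_sub_right, real_inner_smul_right, real_inner_comm u g] at htangent
  linarith [(hbound u).1, (hbound (r • u)).2]

end Sandwich

theorem conj_grad_bound_general {n : ℕ}
    (H G Gs : EuclideanSpace ℝ (Fin n) → ℝ)
    (h : EuclideanSpace ℝ (Fin n) → EuclideanSpace ℝ (Fin n))
    (β γ : ℝ)
    (hH : ConvexOn ℝ Set.univ H)
    (hh : ∀ u, HasGradientAt H (h u) u)
    (hGs : ∀ v, IsLUB {x : ℝ | ∃ u, x = ⟪u, v⟫ - G u} (Gs v))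
    (hbound : ∀ u, -β ≤ H u ∧ H u ≤ G u + γ) :
    ∀ (r : ℝ), 1 < r → ∀ u,
      Gs (h u) ≤ (r - 1)⁻¹ * G (r • u) + (r / (r - 1)) * (β + γ) := by
  intro r hr u
  have hr1 : 0 < r - 1 := sub_pos.mpr hr
  have hconj := conjugate_le_inner_add_of_sandwich hH (hh u) hbound (hGs (h u))
  have hinner : ⟪u, h u⟫ ≤ (r - 1)⁻¹ * (G (r • u) + β + γ) := by
    rw [inv_mul_eq_div, le_div_iff₀ hr1, mul_comm]
    exact sub_one_mul_inner_le_of_sandwich hH (hh u) hbound r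
  calc Gs (h u) ≤ (r - 1)⁻¹ * (G (r • u) + β + γ) + (β + γ) := by linarith
    _ = (r - 1)⁻¹ * G (r • u) + (r / (r - 1)) * (β + γ) := by
      field_simp
      ring

/-- If `H` is differentiable convex with gradient `h`, `G` is convex and
superlinear, and `-β ≤ H u ≤ G u + γ` with `β, γ > 0`, then for any `r > 1`,
`G⋆(h u) ≤ (1/(r-1)) G(r u) + (r/(r-1)) (β + γ)`. -/
theorem conj_grad_bound {n : ℕ}
    (H G Gs : EuclideanSpace ℝ (Fin n) → ℝ)
    (h : EuclideanSpace ℝ (Fin n) → EuclideanSpace ℝ (Fin n))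
    (β γ : ℝ) (hβ : 0 < β) (hγ : 0 < γ)
    (hH : ConvexOn ℝ Set.univ H)
    (hh : ∀ u, HasGradientAt H (h u) u)
    (hG : ConvexOn ℝ Set.univ G)
    (hsuper : Tendsto (fun u : EuclideanSpace ℝ (Fin n) => G u / ‖u‖) (cocompact _) atTop)
    (hGs : ∀ v, IsLUB {x : ℝ | ∃ u, x = ⟪u, v⟫ - G u} (Gs v))
    (hbound : ∀ u, -β ≤ H u ∧ H u ≤ G u + γ) :
    ∀ (r : ℝ), 1 < r → ∀ u,
      Gs (h u) ≤ (r - 1)⁻¹ * G (r • u) + (r / (r - 1)) * (β + γ) :=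
  conj_grad_bound_general H G Gs h β γ hH hh hGs hbound
end

section
/- Let G : ℝ^{2n} → [0,∞) be a semi-symplectic G-function, with constants K > 0, C ≥ 0 such that G⋆(Ju) ≤ G(Ku) + C for all u ∈ ℝ^{2n}. Then for every u in the Orlicz space L^G([0,T], ℝ^{2n}), the function Ju belongs to L^{G⋆}([0,T], ℝ^{2n}) and ‖Ju‖_{G⋆} ≤ K(C·T + 1)·‖u‖_G, where ‖·‖_G denotes the Luxemburg norm. -/
open scoped RealInnerProductSpace
open Filter MeasureTheory

/-!
Pointwise, `G⋆(a • Ju) ≤ G(K a • u) + C`, so integrating over `[0,T]` gives membership of `Ju`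
and bounds the `G⋆`-modular of `Ju / (K c)` by `1 + C T` whenever `c` is admissible for the
Luxemburg norm of `u`. Both `G` (convex with `G 0 = 0`) and `G⋆` (the conjugate of a nonnegative
function) satisfy `Φ (θ • v) ≤ θ Φ v` for `θ ∈ [0,1]`; shrinking by `θ = (C T + 1)⁻¹` brings the
modular down to `1`, so `K (C T + 1) c` is admissible for `Ju`.
-/

theorem ConvexOn.map_smul_le_of_map_zero {E : Type*} [AddCommGroup E] [Module ℝ E]
    {G : E → ℝ} (hG : ConvexOn ℝ Set.univ G) (hG0 : G 0 = 0) {θ : ℝ} (hθ0 : 0 ≤ θ)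
    (hθ1 : θ ≤ 1) (w : E) : G (θ • w) ≤ θ * G w := by
  simpa [hG0] using
    hG.2 (Set.mem_univ w) (Set.mem_univ 0) hθ0 (sub_nonneg.mpr hθ1) (add_sub_cancel θ 1)

theorem conjugate_smul_le {E F : Type*} [SMul ℝ F] (pair : E → F → ℝ)
    (hpair : ∀ u (θ : ℝ) v, pair u (θ • v) = θ * pair u v) {G : E → ℝ} (hG : ∀ u, 0 ≤ G u)
    {Gs : F → ℝ} (hGs : ∀ v, IsLUB {x | ∃ u, x = pair u v - G u} (Gs v)) {θ : ℝ}
    (hθ0 : 0 ≤ θ) (hθ1 : θ ≤ 1) (v : F) : Gs (θ • v) ≤ θ * Gs v := by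
  refine (hGs (θ • v)).2 ?_
  rintro _ ⟨u, rfl⟩
  have hle : pair u v - G u ≤ Gs v := (hGs v).1 ⟨u, rfl⟩
  calc pair u (θ • v) - G u ≤ θ * (pair u v - G u) := by nlinarith [hpair u θ v, hG u]
    _ ≤ θ * Gs v := mul_le_mul_of_nonneg_left hle hθ0

section Luxemburg

variable {α E F : Type*} [MeasurableSpace α] {μ : Measure α}

def luxemburgSet [SMul ℝ E] (μ : Measure α) (Φ : E → ℝ) (f : α → E) : Set ℝ :=
  {c | 0 < c ∧ ∫⁻ t, ENNReal.ofReal (Φ (c⁻¹ • f t)) ∂μ ≤ 1}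

theorem lintegral_ofReal_le_add_const {f g : α → ℝ} {C : ℝ} (hg : ∀ t, 0 ≤ g t) (hC : 0 ≤ C)
    (hfg : ∀ t, f t ≤ g t + C) :
    ∫⁻ t, ENNReal.ofReal (f t) ∂μ ≤ ∫⁻ t, ENNReal.ofReal (g t) ∂μ + ENNReal.ofReal C * μ .univ :=
  calc ∫⁻ t, ENNReal.ofReal (f t) ∂μ
      ≤ ∫⁻ t, (ENNReal.ofReal (g t) + ENNReal.ofReal C) ∂μ := by
        refine lintegral_mono fun t => ?_
        rw [← ENNReal.ofReal_add (hg t) hC]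
        exact ENNReal.ofReal_le_ofReal (hfg t)
    _ = ∫⁻ t, ENNReal.ofReal (g t) ∂μ + ENNReal.ofReal C * μ .univ := by
        rw [lintegral_add_right _ measurable_const, lintegral_const]

theorem lintegral_ofReal_smul_le [SMul ℝ F] {Ψ : F → ℝ} {θ : ℝ} (hθ : 0 ≤ θ)
    (hΨ : ∀ v, Ψ (θ • v) ≤ θ * Ψ v) (g : α → F) :
    ∫⁻ t, ENNReal.ofReal (Ψ (θ • g t)) ∂μ ≤
      ENNReal.ofReal θ * ∫⁻ t, ENNReal.ofReal (Ψ (g t)) ∂μ := by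
  rw [← lintegral_const_mul' _ _ ENNReal.ofReal_ne_top]
  refine lintegral_mono fun t => ?_
  rw [← ENNReal.ofReal_mul hθ]
  exact ENNReal.ofReal_le_ofReal (hΨ (g t))

theorem luxemburgSet_nonempty [MulAction ℝ E] {Φ : E → ℝ}
    (hΦ : ∀ θ : ℝ, 0 ≤ θ → θ ≤ 1 → ∀ v, Φ (θ • v) ≤ θ * Φ v) {f : α → E} {lam : ℝ}
    (hlam : 0 < lam) (hfin : ∫⁻ t, ENNReal.ofReal (Φ (lam • f t)) ∂μ < ⊤) :
    (luxemburgSet μ Φ f).Nonempty := by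
  set M := ∫⁻ t, ENNReal.ofReal (Φ (lam • f t)) ∂μ
  set θ := (M.toReal + 1)⁻¹
  have hθ0 : 0 < θ := by positivity
  have hθ1 : θ ≤ 1 := inv_le_one_of_one_le₀ (by linarith [M.toReal_nonneg])
  refine ⟨(θ * lam)⁻¹, by positivity, ?_⟩
  calc ∫⁻ t, ENNReal.ofReal (Φ ((θ * lam)⁻¹⁻¹ • f t)) ∂μ
      = ∫⁻ t, ENNReal.ofReal (Φ (θ • lam • f t)) ∂μ := by simp only [inv_inv, mul_smul]
    _ ≤ ENNReal.ofReal θ * M := lintegral_ofReal_smul_le hθ0.le (hΦ θ hθ0.le hθ1) _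
    _ = ENNReal.ofReal (θ * M.toReal) := by
        rw [ENNReal.ofReal_mul hθ0.le, ENNReal.ofReal_toReal hfin.ne]
    _ ≤ 1 := ENNReal.ofReal_le_one.mpr <| by
        rw [inv_mul_le_iff₀ (by positivity)]
        linarith

variable [IsFiniteMeasure μ] {Φ : E → ℝ} {Ψ : F → ℝ} {K C : ℝ} {f : α → E} {g : α → F}

theorem lintegral_ofReal_lt_top_of_le_add_const [SMul ℝ E] [SMul ℝ F] (hΦ : ∀ v, 0 ≤ Φ v)
    (hK : 0 < K) (hC : 0 ≤ C) (hdom : ∀ (a : ℝ) t, Ψ (a • g t) ≤ Φ ((K * a) • f t) + C) {lam : ℝ}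
    (hfin : ∫⁻ t, ENNReal.ofReal (Φ (lam • f t)) ∂μ < ⊤) :
    ∫⁻ t, ENNReal.ofReal (Ψ ((lam / K) • g t)) ∂μ < ⊤ := by
  have hpt : ∀ t, Ψ ((lam / K) • g t) ≤ Φ (lam • f t) + C := fun t => by
    simpa only [mul_div_cancel₀ lam hK.ne'] using hdom (lam / K) t
  exact (lintegral_ofReal_le_add_const (fun t => hΦ _) hC hpt).trans_lt
    (ENNReal.add_lt_top.mpr ⟨hfin, ENNReal.mul_lt_top ENNReal.ofReal_lt_top
      (measure_lt_top μ _)⟩)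

theorem mul_mem_luxemburgSet_of_le_add_const [SMul ℝ E] [MulAction ℝ F] (hΦ : ∀ v, 0 ≤ Φ v)
    (hΨ : ∀ θ : ℝ, 0 ≤ θ → θ ≤ 1 → ∀ v, Ψ (θ • v) ≤ θ * Ψ v) (hK : 0 < K) (hC : 0 ≤ C)
    (hdom : ∀ (a : ℝ) t, Ψ (a • g t) ≤ Φ ((K * a) • f t) + C) {c : ℝ}
    (hc : c ∈ luxemburgSet μ Φ f) :
    K * (C * (μ .univ).toReal + 1) * c ∈ luxemburgSet μ Ψ g := by
  obtain ⟨hc0, hcint⟩ := hc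
  set m := (μ .univ).toReal
  set θ := (C * m + 1)⁻¹
  have hCm : 0 ≤ C * m := mul_nonneg hC ENNReal.toReal_nonneg
  have hθ0 : 0 < θ := by positivity
  have hθ1 : θ ≤ 1 := inv_le_one_of_one_le₀ (by linarith)
  have hpt : ∀ t, Ψ ((K * c)⁻¹ • g t) ≤ Φ (c⁻¹ • f t) + C := fun t => by
    simpa only [mul_inv, mul_inv_cancel_left₀ hK.ne'] using hdom (K * c)⁻¹ t
  refine ⟨by positivity, ?_⟩
  calc ∫⁻ t, ENNReal.ofReal (Ψ ((K * (C * m + 1) * c)⁻¹ • g t)) ∂μ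
      = ∫⁻ t, ENNReal.ofReal (Ψ (θ • (K * c)⁻¹ • g t)) ∂μ := by
        simp only [smul_smul, θ]
        congr! 4
        field_simp
    _ ≤ ENNReal.ofReal θ * ∫⁻ t, ENNReal.ofReal (Ψ ((K * c)⁻¹ • g t)) ∂μ :=
        lintegral_ofReal_smul_le hθ0.le (hΨ θ hθ0.le hθ1) _
    _ ≤ ENNReal.ofReal θ * (1 + ENNReal.ofReal C * μ .univ) := by
        gcongr
        exact (lintegral_ofReal_le_add_const (fun t => hΦ _) hC hpt).trans
          (add_le_add_left hcint _)
    _ = ENNReal.ofReal (θ * (1 + C * m)) := by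
        rw [← ENNReal.ofReal_toReal (measure_ne_top μ .univ), ← ENNReal.ofReal_mul hC,
          ← ENNReal.ofReal_one, ← ENNReal.ofReal_add zero_le_one hCm,
          ← ENNReal.ofReal_mul hθ0.le]
    _ = 1 := by
        rw [add_comm 1, inv_mul_cancel₀ (by positivity), ENNReal.ofReal_one]

theorem sInf_luxemburgSet_le_of_le_add_const [MulAction ℝ E] [MulAction ℝ F]
    (hΦ : ∀ v, 0 ≤ Φ v)
    (hΦs : ∀ θ : ℝ, 0 ≤ θ → θ ≤ 1 → ∀ v, Φ (θ • v) ≤ θ * Φ v)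
    (hΨ : ∀ θ : ℝ, 0 ≤ θ → θ ≤ 1 → ∀ v, Ψ (θ • v) ≤ θ * Ψ v) (hK : 0 < K) (hC : 0 ≤ C)
    (hdom : ∀ (a : ℝ) t, Ψ (a • g t) ≤ Φ ((K * a) • f t) + C) {lam : ℝ} (hlam : 0 < lam)
    (hfin : ∫⁻ t, ENNReal.ofReal (Φ (lam • f t)) ∂μ < ⊤) :
    sInf (luxemburgSet μ Ψ g) ≤ K * (C * (μ .univ).toReal + 1) * sInf (luxemburgSet μ Φ f) := by
  have hconst : 0 ≤ K * (C * (μ .univ).toReal + 1) := by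
    have := mul_nonneg hC (μ .univ).toReal_nonneg
    positivity
  rw [← smul_eq_mul, ← Real.sInf_smul_of_nonneg hconst]
  refine csInf_le_csInf ⟨0, fun c hc => hc.1.le⟩
    ((luxemburgSet_nonempty hΦs hlam hfin).smul_set) ?_
  rintro _ ⟨c, hc, rfl⟩
  exact mul_mem_luxemburgSet_of_le_add_const hΦ hΨ hK hC hdom hc

end Luxemburg

theorem semisymplectic_embedding_general {n : ℕ} (T : ℝ) (hT : 0 < T)
    (G Gs : EuclideanSpace ℝ (Fin n) × EuclideanSpace ℝ (Fin n) → ℝ)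
    (hconv : ConvexOn ℝ Set.univ G)
    (hnonneg : ∀ u, 0 ≤ G u)
    (hzero : ∀ u, G u = 0 ↔ u = 0)
    (hGs : ∀ v, IsLUB {x : ℝ | ∃ u : EuclideanSpace ℝ (Fin n) × EuclideanSpace ℝ (Fin n),
      x = ⟪u.1, v.1⟫ + ⟪u.2, v.2⟫ - G u} (Gs v))
    (K C : ℝ) (hK : 0 < K) (hC : 0 ≤ C)
    (hsemi : ∀ u : EuclideanSpace ℝ (Fin n) × EuclideanSpace ℝ (Fin n),
      Gs (u.2, -u.1) ≤ G (K • u) + C)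
    (u : ℝ → EuclideanSpace ℝ (Fin n) × EuclideanSpace ℝ (Fin n))
    (hmem : ∃ lam : ℝ, 0 < lam ∧
      ∫⁻ t in Set.Icc (0:ℝ) T, ENNReal.ofReal (G (lam • u t)) < ⊤) :
    (∃ lam : ℝ, 0 < lam ∧
      ∫⁻ t in Set.Icc (0:ℝ) T, ENNReal.ofReal (Gs (lam • ((u t).2, -(u t).1))) < ⊤) ∧
    sInf {c : ℝ | 0 < c ∧
        ∫⁻ t in Set.Icc (0:ℝ) T, ENNReal.ofReal (Gs (c⁻¹ • ((u t).2, -(u t).1))) ≤ 1} ≤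
      K * (C * T + 1) *
        sInf {c : ℝ | 0 < c ∧
          ∫⁻ t in Set.Icc (0:ℝ) T, ENNReal.ofReal (G (c⁻¹ • u t)) ≤ 1} := by
  obtain ⟨lam, hlam, hfin⟩ := hmem
  have hGscale : ∀ θ : ℝ, 0 ≤ θ → θ ≤ 1 → ∀ w, G (θ • w) ≤ θ * G w :=
    fun _ hθ0 hθ1 => hconv.map_smul_le_of_map_zero ((hzero 0).mpr rfl) hθ0 hθ1
  have hGsscale : ∀ θ : ℝ, 0 ≤ θ → θ ≤ 1 → ∀ v, Gs (θ • v) ≤ θ * Gs v :=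
    fun _ => conjugate_smul_le (fun u v => ⟪u.1, v.1⟫ + ⟪u.2, v.2⟫)
      (fun _ _ _ => by simp only [Prod.smul_fst, Prod.smul_snd, real_inner_smul_right]; ring)
      hnonneg hGs
  have hdom : ∀ (a : ℝ) t, Gs (a • ((u t).2, -(u t).1)) ≤ G ((K * a) • u t) + C :=
    fun a t => by simpa [mul_smul] using hsemi (a • u t)
  have hmass : (volume.restrict (Set.Icc (0:ℝ) T) .univ).toReal = T := by simp [hT.le]
  refine ⟨⟨lam / K, by positivity,
    lintegral_ofReal_lt_top_of_le_add_const hnonneg hK hC hdom hfin⟩, ?_⟩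
  have hnorm :=
    sInf_luxemburgSet_le_of_le_add_const hnonneg hGscale hGsscale hK hC hdom hlam hfin
  rw [hmass] at hnorm
  exact hnorm

/-- If `G` is a semi-symplectic G-function on `ℝ²ⁿ = ℝⁿ × ℝⁿ`
(`G⋆(Ju) ≤ G(Ku) + C` with `K > 0`, `C ≥ 0`, `J(x,y) = (y,-x)`), then for every `u` in
the Orlicz space `L^G([0,T])` the function `Ju` belongs to `L^{G⋆}([0,T])` and its
Luxemburg norm satisfies `‖Ju‖_{G⋆} ≤ K (C T + 1) ‖u‖_G`. Membership in `L^G` means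
that `∫₀ᵀ G(λ u) dt < ∞` for some `λ > 0`, and the Luxemburg norm is
`inf {c > 0 : ∫₀ᵀ G(u/c) dt ≤ 1}`. -/
theorem semisymplectic_embedding {n : ℕ} (T : ℝ) (hT : 0 < T)
    (G Gs : EuclideanSpace ℝ (Fin n) × EuclideanSpace ℝ (Fin n) → ℝ)
    (hconv : ConvexOn ℝ Set.univ G)
    (hnonneg : ∀ u, 0 ≤ G u)
    (hzero : ∀ u, G u = 0 ↔ u = 0)
    (heven : ∀ u, G (-u) = G u)
    (hsuper : Tendsto
      (fun u : EuclideanSpace ℝ (Fin n) × EuclideanSpace ℝ (Fin n) => G u / ‖u‖)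
      (cocompact _) atTop)
    (hGs : ∀ v, IsLUB {x : ℝ | ∃ u : EuclideanSpace ℝ (Fin n) × EuclideanSpace ℝ (Fin n),
      x = ⟪u.1, v.1⟫ + ⟪u.2, v.2⟫ - G u} (Gs v))
    (K C : ℝ) (hK : 0 < K) (hC : 0 ≤ C)
    (hsemi : ∀ u : EuclideanSpace ℝ (Fin n) × EuclideanSpace ℝ (Fin n),
      Gs (u.2, -u.1) ≤ G (K • u) + C)
    (u : ℝ → EuclideanSpace ℝ (Fin n) × EuclideanSpace ℝ (Fin n))
    (hmeas : AEStronglyMeasurable u (volume.restrict (Set.Icc 0 T)))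
    (hmem : ∃ lam : ℝ, 0 < lam ∧
      ∫⁻ t in Set.Icc (0:ℝ) T, ENNReal.ofReal (G (lam • u t)) < ⊤) :
    (∃ lam : ℝ, 0 < lam ∧
      ∫⁻ t in Set.Icc (0:ℝ) T, ENNReal.ofReal (Gs (lam • ((u t).2, -(u t).1))) < ⊤) ∧
    sInf {c : ℝ | 0 < c ∧
        ∫⁻ t in Set.Icc (0:ℝ) T, ENNReal.ofReal (Gs (c⁻¹ • ((u t).2, -(u t).1))) ≤ 1} ≤
      K * (C * T + 1) *
        sInf {c : ℝ | 0 < c ∧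
          ∫⁻ t in Set.Icc (0:ℝ) T, ENNReal.ofReal (G (c⁻¹ • u t)) ≤ 1} :=
  semisymplectic_embedding_general T hT G Gs hconv hnonneg hzero hGs K C hK hC hsemi u hmem
end

section
/- Let G : ℝ^{2n} → [0,∞) be a differentiable symplectic G-function, and define the Simonenko indices p(G) = inf_{u≠0} ⟨u, ∇G(u)⟩/G(u) and q(G) = sup_{u≠0} ⟨u, ∇G(u)⟩/G(u)}. Then p(G⋆) = p(G) and q(G⋆) = q(G). -/
/-!
Since `J` is a linear isometry and `G⋆ ∘ J = G`, the chain rule gives `∇G⋆(Ju) = J ∇G(u)`.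
Hence `⟨Ju, ∇G⋆(Ju)⟩ / G⋆(Ju) = ⟨u, ∇G(u)⟩ / G(u)`, and as `J` permutes the nonzero vectors,
`G` and `G⋆` have the same set of Simonenko ratios, so the same infimum and supremum.
-/

open scoped RealInnerProductSpace
open Filter

section

variable {F F' : Type*} [NormedAddCommGroup F] [InnerProductSpace ℝ F] [CompleteSpace F]
  [NormedAddCommGroup F'] [InnerProductSpace ℝ F'] [CompleteSpace F']

theorem HasGradientAt.comp_linearIsometryEquiv {f : F' → ℝ} {f' : F'} {x : F}
    (L : F ≃ₗᵢ[ℝ] F') (h : HasGradientAt f f' (L x)) :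
    HasGradientAt (f ∘ L) (L.symm f') x := by
  rw [hasGradientAt_iff_hasFDerivAt] at h ⊢
  refine (h.comp x L.toContinuousLinearEquiv.hasFDerivAt).congr_fderiv ?_
  ext w
  simp [LinearIsometryEquiv.inner_map_eq_flip]

theorem gradient_map_of_comp_linearIsometryEquiv {G : F → ℝ} {H : F' → ℝ} {g : F → F}
    {h : F' → F'} (L : F ≃ₗᵢ[ℝ] F') (hHG : ∀ u, H (L u) = G u)
    (hg : ∀ u, HasGradientAt G (g u) u) (hh : ∀ v, HasGradientAt H (h v) v) (u : F) :
    h (L u) = L (g u) := by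
  have hcomp : H ∘ L = G := funext hHG
  have := (hcomp ▸ (hh (L u)).comp_linearIsometryEquiv L).unique (hg u)
  rw [← this, L.apply_symm_apply]

def simonenkoRatios (G : F → ℝ) (g : F → F) : Set EReal :=
  {r | ∃ u, u ≠ 0 ∧ r = ((⟪u, g u⟫ / G u : ℝ) : EReal)}

theorem simonenkoRatios_eq_of_comp_linearIsometryEquiv {G : F → ℝ} {H : F' → ℝ} {g : F → F}
    {h : F' → F'} (L : F ≃ₗᵢ[ℝ] F') (hHG : ∀ u, H (L u) = G u)
    (hg : ∀ u, HasGradientAt G (g u) u) (hh : ∀ v, HasGradientAt H (h v) v) :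
    simonenkoRatios G g = simonenkoRatios H h := by
  have hratio : ∀ u, ⟪L u, h (L u)⟫ / H (L u) = ⟪u, g u⟫ / G u := fun u => by
    rw [gradient_map_of_comp_linearIsometryEquiv L hHG hg hh, L.inner_map_map, hHG]
  ext r
  constructor
  · rintro ⟨u, hu, rfl⟩
    exact ⟨L u, L.map_ne_zero_iff.mpr hu, by rw [hratio]⟩
  · rintro ⟨v, hv, rfl⟩
    refine ⟨L.symm v, L.symm.map_ne_zero_iff.mpr hv, ?_⟩
    rw [← hratio, L.apply_symm_apply]

end

section

variable (E : Type*) [NormedAddCommGroup E] [InnerProductSpace ℝ E]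

noncomputable def symplecticJ : WithLp 2 (E × E) ≃ₗᵢ[ℝ] WithLp 2 (E × E) :=
  LinearEquiv.isometryOfInner
    { toFun := fun u => WithLp.toLp 2 (u.snd, -u.fst)
      invFun := fun u => WithLp.toLp 2 (-u.snd, u.fst)
      map_add' := fun u v => by rw [WithLp.ext_iff]; ext <;> simp [add_comm]
      map_smul' := fun c u => by rw [WithLp.ext_iff]; ext <;> simp
      left_inv := fun u => by rw [WithLp.ext_iff]; ext <;> simp
      right_inv := fun u => by rw [WithLp.ext_iff]; ext <;> simp }
    (fun u v => by simp [add_comm])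

theorem symplecticJ_apply (u : WithLp 2 (E × E)) :
    symplecticJ E u = (WithLp.equiv 2 _).symm ((WithLp.equiv 2 _ u).2, -(WithLp.equiv 2 _ u).1) :=
  rfl

end

theorem simonenko_indices_conj_general {n : ℕ}
    (G Gs : WithLp 2 (EuclideanSpace ℝ (Fin n) × EuclideanSpace ℝ (Fin n)) → ℝ)
    (g gs : WithLp 2 (EuclideanSpace ℝ (Fin n) × EuclideanSpace ℝ (Fin n)) →
      WithLp 2 (EuclideanSpace ℝ (Fin n) × EuclideanSpace ℝ (Fin n)))
    (J : WithLp 2 (EuclideanSpace ℝ (Fin n) × EuclideanSpace ℝ (Fin n)) →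
      WithLp 2 (EuclideanSpace ℝ (Fin n) × EuclideanSpace ℝ (Fin n)))
    (hJ : ∀ u, J u = (WithLp.equiv 2 _).symm
      (((WithLp.equiv 2 _) u).2, -((WithLp.equiv 2 _) u).1))
    (hg : ∀ u, HasGradientAt G (g u) u)
    (hgs : ∀ v, HasGradientAt Gs (gs v) v)
    (hsymp : ∀ u, Gs (J u) = G u) :
    sInf {r : EReal | ∃ u, u ≠ 0 ∧ r = ((⟪u, g u⟫ / G u : ℝ) : EReal)} =
      sInf {r : EReal | ∃ v, v ≠ 0 ∧ r = ((⟪v, gs v⟫ / Gs v : ℝ) : EReal)} ∧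
    sSup {r : EReal | ∃ u, u ≠ 0 ∧ r = ((⟪u, g u⟫ / G u : ℝ) : EReal)} =
      sSup {r : EReal | ∃ v, v ≠ 0 ∧ r = ((⟪v, gs v⟫ / Gs v : ℝ) : EReal)} := by
  have hJ_eq : ⇑(symplecticJ _) = J := funext fun u => (symplecticJ_apply _ u).trans (hJ u).symm
  have hratios : simonenkoRatios G g = simonenkoRatios Gs gs :=
    simonenkoRatios_eq_of_comp_linearIsometryEquiv (symplecticJ _) (hJ_eq ▸ hsymp) hg hgs
  exact ⟨congrArg sInf hratios, congrArg sSup hratios⟩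

/-- For a differentiable symplectic G-function `G` on `ℝ²ⁿ`
(with differentiable conjugate `Gs = G⋆`, `∇G⋆ = (∇G)⁻¹`, `G⋆(Ju) = G u`), the
Simonenko indices coincide: `p(G⋆) = p(G)` and `q(G⋆) = q(G)`, where
`p(F) = inf_{u ≠ 0} ⟨u, ∇F(u)⟩/F(u)` and `q(F) = sup_{u ≠ 0} ⟨u, ∇F(u)⟩/F(u)`
(taken in the extended reals). Here `ℝ²ⁿ = ℝⁿ × ℝⁿ` with the ℓ² product inner
product, and `J(x,y) = (y,-x)`. -/
theorem simonenko_indices_conj {n : ℕ}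
    (G Gs : WithLp 2 (EuclideanSpace ℝ (Fin n) × EuclideanSpace ℝ (Fin n)) → ℝ)
    (g gs : WithLp 2 (EuclideanSpace ℝ (Fin n) × EuclideanSpace ℝ (Fin n)) →
      WithLp 2 (EuclideanSpace ℝ (Fin n) × EuclideanSpace ℝ (Fin n)))
    (J : WithLp 2 (EuclideanSpace ℝ (Fin n) × EuclideanSpace ℝ (Fin n)) →
      WithLp 2 (EuclideanSpace ℝ (Fin n) × EuclideanSpace ℝ (Fin n)))
    (hJ : ∀ u, J u = (WithLp.equiv 2 _).symm
      (((WithLp.equiv 2 _) u).2, -((WithLp.equiv 2 _) u).1))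
    (hconv : ConvexOn ℝ Set.univ G)
    (hnonneg : ∀ u, 0 ≤ G u)
    (hzero : ∀ u, G u = 0 ↔ u = 0)
    (heven : ∀ u, G (-u) = G u)
    (hsuper : Tendsto
      (fun u : WithLp 2 (EuclideanSpace ℝ (Fin n) × EuclideanSpace ℝ (Fin n)) => G u / ‖u‖)
      (cocompact _) atTop)
    (hGs : ∀ v, IsLUB {x : ℝ | ∃ u, x = ⟪u, v⟫ - G u} (Gs v))
    (hg : ∀ u, HasGradientAt G (g u) u)
    (hgs : ∀ v, HasGradientAt Gs (gs v) v)
    (hinv : ∀ u, gs (g u) = u ∧ g (gs u) = u)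
    (hsymp : ∀ u, Gs (J u) = G u) :
    sInf {r : EReal | ∃ u, u ≠ 0 ∧ r = ((⟪u, g u⟫ / G u : ℝ) : EReal)} =
      sInf {r : EReal | ∃ v, v ≠ 0 ∧ r = ((⟪v, gs v⟫ / Gs v : ℝ) : EReal)} ∧
    sSup {r : EReal | ∃ u, u ≠ 0 ∧ r = ((⟪u, g u⟫ / G u : ℝ) : EReal)} =
      sSup {r : EReal | ∃ v, v ≠ 0 ∧ r = ((⟪v, gs v⟫ / Gs v : ℝ) : EReal)} :=
  simonenko_indices_conj_general G Gs g gs J hJ hg hgs hsymp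
end
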